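/- arXiv:2008.05045 — 2 statements merged into one kernel-verified Lean document; each statement's English description precedes it below -/
import Mathlib

section
/- If H : ℂⁿ×ⁿ is a complex symmetric matrix whose real part Re(H) (entrywise real parts) is a negative definite real symmetric matrix, then H is nonsingular, i.e. det(H) ≠ 0. -/
/-!
If `H v = 0` then `v* H v = 0`. Writing `H = A + iB` and `v = x + iy`, the real part of
`v* H v` is `xᵀAx + yᵀAy + (yᵀBx - xᵀBy)`, and the bracket vanishes because `B` is symmetric.
So `Re (v* H v) = xᵀAx + yᵀAy < 0` for `v ≠ 0`, and `H` has trivial kernel.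
-/

open Matrix

namespace Matrix

variable {n : Type*} [Fintype n]

theorem det_ne_zero_of_star_dotProduct_mulVec_ne_zero {K : Type*} [Field K] [Star K]
    [DecidableEq n] {M : Matrix n n K} (h : ∀ v ≠ 0, star v ⬝ᵥ M *ᵥ v ≠ 0) : M.det ≠ 0 := by
  intro hdet
  obtain ⟨v, hv, hMv⟩ := exists_mulVec_eq_zero_iff.2 hdet
  exact h v hv (by rw [hMv, dotProduct_zero])

theorem re_star_dotProduct_mulVec (M : Matrix n n ℂ) (v : n → ℂ) :
    (star v ⬝ᵥ M *ᵥ v).re =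
      (Complex.re ∘ v) ⬝ᵥ M.map Complex.re *ᵥ (Complex.re ∘ v)
        + (Complex.im ∘ v) ⬝ᵥ M.map Complex.re *ᵥ (Complex.im ∘ v)
        + ((Complex.im ∘ v) ⬝ᵥ M.map Complex.im *ᵥ (Complex.re ∘ v)
          - (Complex.re ∘ v) ⬝ᵥ M.map Complex.im *ᵥ (Complex.im ∘ v)) := by
  simp only [dotProduct, mulVec, Complex.re_sum, Finset.mul_sum, ← Finset.sum_add_distrib,
    ← Finset.sum_sub_distrib]
  refine Finset.sum_congr rfl fun i _ => Finset.sum_congr rfl fun j _ => ?_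
  simp only [Pi.star_apply, Complex.star_def, Complex.mul_re, Complex.mul_im, Complex.conj_re,
    Complex.conj_im, map_apply, Function.comp_apply]
  ring

theorem re_star_dotProduct_mulVec_of_transpose_eq {H : Matrix n n ℂ} (hH : Hᵀ = H)
    (v : n → ℂ) :
    (star v ⬝ᵥ H *ᵥ v).re =
      (Complex.re ∘ v) ⬝ᵥ H.map Complex.re *ᵥ (Complex.re ∘ v)
        + (Complex.im ∘ v) ⬝ᵥ H.map Complex.re *ᵥ (Complex.im ∘ v) := by
  have hB : (H.map Complex.im)ᵀ = H.map Complex.im := by rw [← transpose_map, hH]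
  have hcross : (Complex.im ∘ v) ⬝ᵥ H.map Complex.im *ᵥ (Complex.re ∘ v)
      = (Complex.re ∘ v) ⬝ᵥ H.map Complex.im *ᵥ (Complex.im ∘ v) := by
    rw [dotProduct_mulVec, ← mulVec_transpose, hB, dotProduct_comm]
  rw [re_star_dotProduct_mulVec, hcross, sub_self, add_zero]

theorem PosDef.dotProduct_mulVec_add_dotProduct_mulVec_pos {P : Matrix n n ℝ} (hP : P.PosDef)
    {x y : n → ℝ} (hxy : x ≠ 0 ∨ y ≠ 0) : 0 < x ⬝ᵥ P *ᵥ x + y ⬝ᵥ P *ᵥ y := by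
  have hx := hP.posSemidef.dotProduct_mulVec_nonneg x
  have hy := hP.posSemidef.dotProduct_mulVec_nonneg y
  rw [star_trivial] at hx hy
  rcases hxy with h | h <;>
  · have hpos := hP.dotProduct_mulVec_pos h
    rw [star_trivial] at hpos
    linarith

end Matrix

/-- A complex symmetric matrix whose entrywise real part is negative definite is nonsingular. -/
theorem det_ne_zero_of_re_negDef (n : ℕ) (H : Matrix (Fin n) (Fin n) ℂ)
    (hsymm : H.transpose = H)
    (hneg : (-(H.map Complex.re)).PosDef) :
    H.det ≠ 0 := by
  refine det_ne_zero_of_star_dotProduct_mulVec_ne_zero fun v hv hform => ?_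
  have hxy : Complex.re ∘ v ≠ 0 ∨ Complex.im ∘ v ≠ 0 := by
    by_contra! h
    exact hv (funext fun i => Complex.ext (congrFun h.1 i) (congrFun h.2 i))
  have hpos := hneg.dotProduct_mulVec_add_dotProduct_mulVec_pos hxy
  have hre := congrArg Complex.re hform
  rw [re_star_dotProduct_mulVec_of_transpose_eq hsymm, Complex.zero_re] at hre
  simp only [neg_mulVec, dotProduct_neg] at hpos
  linarith
end

section
/- The Lobachevsky function Λ(θ) = −∫₀^θ log|2 sin t| dt is an odd function of period π: Λ(−θ) = −Λ(θ) and Λ(θ + π) = Λ(θ) for all real θ. -/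
open Real

/-- The Lobachevsky function. -/
noncomputable def lob (θ : ℝ) : ℝ := -∫ t in (0:ℝ)..θ, Real.log |2 * Real.sin t|

/-!
The integrand `log |2 sin t|` is even and `π`-periodic, so `Λ` is odd, and `Λ(θ + π) - Λ(θ)` is
minus the integral over one period `[0, π]`. That integral vanishes because
`∫₀^π log (sin t) dt = -π log 2`.
-/

open MeasureTheory intervalIntegral
open scoped Interval

theorem integral_zero_neg_of_even {E : Type*} [NormedAddCommGroup E] [NormedSpace ℝ E]
    {f : ℝ → E} (hf : ∀ x, f (-x) = f x) (b : ℝ) :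
    ∫ x in 0..-b, f x = -∫ x in 0..b, f x := by
  calc ∫ x in 0..-b, f x = ∫ x in 0..-b, f (-x) := by simp only [hf]
    _ = ∫ x in b..0, f x := by rw [integral_comp_neg, neg_neg, neg_zero]
    _ = -∫ x in 0..b, f x := integral_symm 0 b

theorem intervalIntegrable_log_abs_two_mul_sin (a b : ℝ) :
    IntervalIntegrable (fun t => log |2 * sin t|) volume a b := by
  have hmero : MeromorphicOn (fun t : ℝ => 2 * sin t) (Set.uIcc a b) :=
    (analyticOnNhd_const.mul analyticOnNhd_sin).meromorphicOn
  simpa only [Real.norm_eq_abs] using hmero.intervalIntegrable_log_norm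

theorem ae_sin_ne_zero : ∀ᵐ t : ℝ, sin t ≠ 0 := by
  have hzeros : {t : ℝ | sin t = 0}.Countable :=
    (Set.countable_range fun n : ℤ => (n : ℝ) * π).mono fun _ ht => sin_eq_zero_iff.mp ht
  exact hzeros.ae_notMem volume

theorem integral_log_abs_two_mul_sin_zero_pi : ∫ t in 0..π, log |2 * sin t| = 0 := by
  have hsplit : ∀ᵐ t : ℝ, t ∈ Ι 0 π → log |2 * sin t| = log 2 + log (sin t) := by
    filter_upwards [ae_sin_ne_zero] with t ht _
    rw [log_abs, log_mul two_ne_zero ht]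
  rw [integral_congr_ae hsplit, integral_add (g := fun t => log (sin t)) intervalIntegrable_const intervalIntegrable_log_sin,
    integral_log_sin_zero_pi, intervalIntegral.integral_const, smul_eq_mul]
  ring

theorem periodic_log_abs_two_mul_sin : Function.Periodic (fun t => log |2 * sin t|) π := by
  intro t
  simp only [sin_add_pi, mul_neg, abs_neg]

/-- The Lobachevsky function is odd and π-periodic. -/
theorem lob_odd_periodic :
    (∀ θ : ℝ, lob (-θ) = -lob θ) ∧ (∀ θ : ℝ, lob (θ + π) = lob θ) := by
  refine ⟨fun θ => ?_, fun θ => ?_⟩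
  · have heven : ∀ t : ℝ, log |2 * sin (-t)| = log |2 * sin t| := by simp
    rw [lob, lob, integral_zero_neg_of_even heven]
  · rw [lob, lob, periodic_log_abs_two_mul_sin.intervalIntegral_add_eq_add 0 θ
      intervalIntegrable_log_abs_two_mul_sin, zero_add, integral_log_abs_two_mul_sin_zero_pi,
      add_zero]
end
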